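/- Let g ≥ 4 with m = ⌊g/2⌋ = 2t even, and let n ≥ 1. Then the quotient of π_g by the normal closure of the images of the words in ℬ^g_1 ∪ 𝒞 ∪ Φ_n is isomorphic to ℤ × ℤ/nℤ. -/

import Mathlib

namespace Paper

/-- The free group `F_g` on the `2g` generators `a_1, b_1, …, a_g, b_g`
(the pair `(i, false)` is `a_{i+1}`, the pair `(i, true)` is `b_{i+1}`). -/
abbrev F (g : ℕ) := FreeGroup (Fin g × Bool)

/-- The generator `a_i` of `F_g`, for `1 ≤ i ≤ g`; by convention `a_i = 1` for out-of-range
indices (in particular `a_{g+1} = 1`). -/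
def a (g i : ℕ) : F g :=
  if h : 1 ≤ i ∧ i ≤ g then FreeGroup.of (⟨i - 1, by omega⟩, false) else 1

/-- The generator `b_i` of `F_g`, for `1 ≤ i ≤ g`. -/
def b (g i : ℕ) : F g :=
  if h : 1 ≤ i ∧ i ≤ g then FreeGroup.of (⟨i - 1, by omega⟩, true) else 1

/-- The word `c_i = b_i⁻¹ ⋯ b_2⁻¹ b_1⁻¹ (a_1 b_1 a_1⁻¹)(a_2 b_2 a_2⁻¹) ⋯ (a_i b_i a_i⁻¹)`,
with `c_0 = 1`. -/
def c (g i : ℕ) : F g :=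
  (((List.range i).reverse.map fun j => (b g (j + 1))⁻¹).prod) *
    (((List.range i).map fun j => a g (j + 1) * b g (j + 1) * (a g (j + 1))⁻¹).prod)

/-- The product `b_i b_{i+1} ⋯ b_j`. -/
def prodb (g i j : ℕ) : F g := ((List.range (j + 1 - i)).map fun l => b g (i + l)).prod

/-- `B^h_{0,1} = b_1 b_2 ⋯ b_h`. -/
def B01 (g h : ℕ) : F g := prodb g 1 h

/-- `B^h_{0,2} = b_1 b_2 ⋯ b_h · c_h a_{h+1}`. -/
def B02 (g h : ℕ) : F g := prodb g 1 h * c g h * a g (h + 1)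

/-- `B^h_{0,s}` for `s = 1, 2`. -/
def B0 (g s h : ℕ) : F g := if s = 1 then B01 g h else B02 g h

/-- `B^h_{2k-1} = a_k · b_k b_{k+1} ⋯ b_{h+1-k} · c_{h+1-k} a_{h+1-k}`. -/
def Bodd (g h k : ℕ) : F g :=
  a g k * prodb g k (h + 1 - k) * c g (h + 1 - k) * a g (h + 1 - k)

/-- `B^h_{2k} = a_k · b_{k+1} b_{k+2} ⋯ b_{h-k} · c_{h-k} a_{h+1-k}`. -/
def Beven (g h k : ℕ) : F g :=
  a g k * prodb g (k + 1) (h - k) * c g (h - k) * a g (h + 1 - k)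

/-- The set of words `ℬ^h_s`: it consists of `B^h_{0,s}, B^h_1, …, B^h_h` (the odd-indexed
`B^h_{2k-1}` for `2k - 1 ≤ h` and the even-indexed `B^h_{2k}` for `2k ≤ h`), together with
`a_{r+1}` and `c_r a_{r+1}` when `h = 2r + 1` is odd. -/
def Bset (g s h : ℕ) : Set (F g) :=
  {B0 g s h}
    ∪ {w | ∃ k, 1 ≤ k ∧ 2 * k - 1 ≤ h ∧ w = Bodd g h k}
    ∪ {w | ∃ k, 1 ≤ k ∧ 2 * k ≤ h ∧ w = Beven g h k}
    ∪ (if h % 2 = 1 then {a g (h / 2 + 1), c g (h / 2) * a g (h / 2 + 1)} else (∅ : Set (F g)))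

/-- The genus-`g` surface group `π_g`, presented with generators `a_1, b_1, …, a_g, b_g`
and the single relator `c_g`. -/
abbrev pi (g : ℕ) := PresentedGroup ({c g g} : Set (F g))

/-- The natural projection `F_g → π_g`. -/
abbrev toPi (g : ℕ) : F g →* pi g := PresentedGroup.mk _

/-- The quotient of `π_g` by the normal closure of the images of a set `S` of words. -/
abbrev quotBy (g : ℕ) (S : Set (F g)) :=
  pi g ⧸ Subgroup.normalClosure (toPi g '' S)

/-- The projection `π_g → π_g / N(S)`. -/
abbrev projBy (g : ℕ) (S : Set (F g)) : pi g →* quotBy g S :=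
  QuotientGroup.mk' _

/-- The descending product `a_i a_{i-1} ⋯ a_j`. -/
def prodaDesc (g i j : ℕ) : F g := ((List.range (i + 1 - j)).map fun l => a g (i - l)).prod

/-- The set `𝒞 = ℬ^{2t}_s ∪ {c_t}` with `m = g / 2 = 2t` and `s = 1` for `g` even, `s = 2`
for `g` odd. -/
def Cset (g : ℕ) : Set (F g) :=
  Bset g (if g % 2 = 0 then 1 else 2) (g / 2)
    ∪ (if (g / 2) % 2 = 0 then {c g (g / 2 / 2)} else (∅ : Set (F g)))

/-- The set `Φ_n` of words representing the images `φ_n(𝒞)` of the vanishing cycles under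
the twisting map `φ_n`, for `⌊g/2⌋ = 2t`:
`a_t^n a_{t-1} ⋯ a_2 a_1 B^{2t}_{0,s}`;
`b_{2t+1-k}⁻¹ a_t^n (a_{t+1} a_t ⋯ a_{k+1} a_k) B^{2t}_{2k-1}` for `1 ≤ k ≤ t - 1`;
`b_{2t+1-k}⁻¹ a_t^n (a_{t+1} a_t ⋯ a_{k+2} a_{k+1}) B^{2t}_{2k}` for `1 ≤ k ≤ t - 1`;
`a_t^n B^{2t}_{2t-1}`; `B^{2t}_{2t}`; and `c_t`. -/
def Phi (g s t n : ℕ) : Set (F g) :=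
  {a g t ^ n * prodaDesc g (t - 1) 1 * B0 g s (2 * t)}
    ∪ {w | ∃ k, 1 ≤ k ∧ k ≤ t - 1 ∧
        w = (b g (2 * t + 1 - k))⁻¹ * a g t ^ n * prodaDesc g (t + 1) k * Bodd g (2 * t) k}
    ∪ {w | ∃ k, 1 ≤ k ∧ k ≤ t - 1 ∧
        w = (b g (2 * t + 1 - k))⁻¹ * a g t ^ n * prodaDesc g (t + 1) (k + 1) *
              Beven g (2 * t) k}
    ∪ {a g t ^ n * Bodd g (2 * t) t, Beven g (2 * t) t, c g t}


/-! ### Auxiliary development -/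

section Recurrences

variable {g : ℕ}

lemma c_zero : c g 0 = 1 := by simp [c]

lemma c_succ (i : ℕ) :
    c g (i + 1) = (b g (i + 1))⁻¹ * c g i * (a g (i + 1) * b g (i + 1) * (a g (i + 1))⁻¹) := by
  unfold c
  rw [List.range_succ]
  simp [mul_assoc]

lemma prodb_empty {i j : ℕ} (h : j < i) : prodb g i j = 1 := by
  have : j + 1 - i = 0 := by omega
  simp [prodb, this]

lemma prodb_succ {i j : ℕ} (h : i ≤ j + 1) :
    prodb g i (j + 1) = prodb g i j * b g (j + 1) := by
  unfold prodb
  rw [show j + 1 + 1 - i = (j + 1 - i) + 1 by omega, List.range_succ]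
  simp [show i + (j + 1 - i) = j + 1 by omega]

lemma prodb_single (i : ℕ) : prodb g i i = b g i := by
  have h : i ≤ (i - 1) + 1 := by omega
  rcases Nat.eq_zero_or_pos i with h0 | h0
  · subst h0; simp [prodb, List.range_succ]
  · rw [show i = (i - 1) + 1 by omega, prodb_succ (by omega), prodb_empty (by omega), one_mul]

lemma prodb_split {i m j : ℕ} (h1 : i ≤ m + 1) (h2 : m ≤ j) :
    prodb g i j = prodb g i m * prodb g (m + 1) j := by
  induction j, h2 using Nat.le_induction with
  | base => rw [show prodb g (m + 1) m = 1 from prodb_empty (by omega), mul_one]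
  | succ j hj ih =>
    rw [prodb_succ (by omega), prodb_succ (by omega), ih, mul_assoc]

lemma prodaDesc_empty {i j : ℕ} (h : i < j) : prodaDesc g i j = 1 := by
  have : i + 1 - j = 0 := by omega
  simp [prodaDesc, this]

lemma prodaDesc_succ {i j : ℕ} (h : j ≤ i + 1) :
    prodaDesc g (i + 1) j = a g (i + 1) * prodaDesc g i j := by
  unfold prodaDesc
  rw [show i + 1 + 1 - j = (i + 1 - j) + 1 by omega, List.range_succ_eq_map]
  simp [List.map_map, Function.comp_def]

lemma prodaDesc_bot {i j : ℕ} (h : j ≤ i) :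
    prodaDesc g i j = prodaDesc g i (j + 1) * a g j := by
  unfold prodaDesc
  rw [show i + 1 - j = (i + 1 - (j + 1)) + 1 by omega, List.range_succ]
  simp only [List.map_append, List.prod_append, List.map_cons, List.map_nil,
    List.prod_cons, List.prod_nil, mul_one]
  rw [show i - (i + 1 - (j + 1)) = j by omega]

lemma prodaDesc_top {i j : ℕ} (hj : j ≤ i) (hi : 1 ≤ i) :
    prodaDesc g i j = a g i * prodaDesc g (i - 1) j := by
  obtain ⟨i', rfl⟩ : ∃ i', i = i' + 1 := ⟨i - 1, by omega⟩
  rw [prodaDesc_succ (by omega)]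
  simp

/-- The word `D_j = ∏_{l=2t+1}^{j} a_l b_l a_l⁻¹`. -/
def dword (g t j : ℕ) : F g :=
  ((List.range (j - 2 * t)).map fun l =>
    a g (2 * t + 1 + l) * b g (2 * t + 1 + l) * (a g (2 * t + 1 + l))⁻¹).prod

lemma dword_base {t : ℕ} : dword g t (2 * t) = 1 := by simp [dword]

lemma dword_succ {t j : ℕ} (h : 2 * t ≤ j) :
    dword g t (j + 1) = dword g t j * (a g (j + 1) * b g (j + 1) * (a g (j + 1))⁻¹) := by
  unfold dword
  rw [show j + 1 - 2 * t = (j - 2 * t) + 1 by omega, List.range_succ]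
  simp [show 2 * t + 1 + (j - 2 * t) = j + 1 by omega]

end Recurrences


section Setup

/-- The full relator set. -/
def Sfull (g t n : ℕ) : Set (F g) :=
  Bset g 1 g ∪ Cset g ∪ Phi g (if g % 2 = 0 then 1 else 2) t n

/-- The quotient group under study. -/
abbrev Qgrp (g t n : ℕ) := quotBy g (Sfull g t n)

/-- The projection from the free group to the quotient. -/
def pr (g t n : ℕ) : F g →* Qgrp g t n := (projBy g (Sfull g t n)).comp (toPi g)

lemma pr_rel {g t n : ℕ} {w : F g} (hw : w ∈ Sfull g t n) : pr g t n w = 1 := by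
  have h : toPi g w ∈ Subgroup.normalClosure (toPi g '' Sfull g t n) :=
    Subgroup.subset_normalClosure ⟨w, hw, rfl⟩
  simpa [pr, projBy, QuotientGroup.eq_one_iff] using h

lemma pr_c_g (g t n : ℕ) : pr g t n (c g g) = 1 := by
  have h : c g g ∈ Subgroup.normalClosure ({c g g} : Set (F g)) :=
    Subgroup.subset_normalClosure rfl
  have h2 : toPi g (c g g) = 1 := (QuotientGroup.eq_one_iff _).mpr h
  simp [pr, h2]

end Setup

section Membership

variable {g t n : ℕ}

lemma mem_BoddG {k : ℕ} (h1 : 1 ≤ k) (h2 : 2 * k - 1 ≤ g) : Bodd g g k ∈ Sfull g t n :=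
  Set.mem_union_left _ <| Set.mem_union_left _ <| Set.mem_union_left _ <|
    Set.mem_union_left _ <| Set.mem_union_right _ ⟨k, h1, h2, rfl⟩

lemma mem_BevenG {k : ℕ} (h1 : 1 ≤ k) (h2 : 2 * k ≤ g) : Beven g g k ∈ Sfull g t n :=
  Set.mem_union_left _ <| Set.mem_union_left _ <| Set.mem_union_left _ <|
    Set.mem_union_right _ ⟨k, h1, h2, rfl⟩

lemma mem_aodd (hodd : g = 4 * t + 1) : a g (2 * t + 1) ∈ Sfull g t n := by
  apply Set.mem_union_left
  apply Set.mem_union_left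
  apply Set.mem_union_right
  rw [if_pos (by omega : g % 2 = 1)]
  have : g / 2 = 2 * t := by omega
  rw [this]
  exact Set.mem_insert _ _

lemma mem_BoddC (ht : g / 2 = 2 * t) {k : ℕ} (h1 : 1 ≤ k) (h2 : k ≤ t) :
    Bodd g (2 * t) k ∈ Sfull g t n := by
  apply Set.mem_union_left
  apply Set.mem_union_right
  apply Set.mem_union_left
  rw [ht]
  exact Set.mem_union_left _ (Set.mem_union_left _ (Set.mem_union_right _
    ⟨k, h1, by omega, rfl⟩))

lemma mem_BevenC (ht : g / 2 = 2 * t) {k : ℕ} (h1 : 1 ≤ k) (h2 : k ≤ t) :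
    Beven g (2 * t) k ∈ Sfull g t n := by
  apply Set.mem_union_left
  apply Set.mem_union_right
  apply Set.mem_union_left
  rw [ht]
  exact Set.mem_union_left _ (Set.mem_union_right _ ⟨k, h1, by omega, rfl⟩)

lemma mem_ct (ht : g / 2 = 2 * t) : c g t ∈ Sfull g t n := by
  apply Set.mem_union_left
  apply Set.mem_union_right
  apply Set.mem_union_right
  rw [if_pos (by omega : g / 2 % 2 = 0), show g / 2 / 2 = t by omega]
  rfl

lemma mem_PhiOdd {k : ℕ} (h1 : 1 ≤ k) (h2 : k ≤ t - 1) :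
    (b g (2 * t + 1 - k))⁻¹ * a g t ^ n * prodaDesc g (t + 1) k * Bodd g (2 * t) k
      ∈ Sfull g t n :=
  Set.mem_union_right _ <| Set.mem_union_left _ <| Set.mem_union_left _ <|
    Set.mem_union_right _ ⟨k, h1, h2, rfl⟩

lemma mem_PhiEven {k : ℕ} (h1 : 1 ≤ k) (h2 : k ≤ t - 1) :
    (b g (2 * t + 1 - k))⁻¹ * a g t ^ n * prodaDesc g (t + 1) (k + 1) * Beven g (2 * t) k
      ∈ Sfull g t n :=
  Set.mem_union_right _ <| Set.mem_union_left _ <|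
    Set.mem_union_right _ ⟨k, h1, h2, rfl⟩

lemma mem_PhiTw : a g t ^ n * Bodd g (2 * t) t ∈ Sfull g t n :=
  Set.mem_union_right _ <| Set.mem_union_right _ <| Set.mem_insert _ _

end Membership


section Derive

variable {g t n : ℕ}

lemma eq1_cancel {G : Type*} [Group G] {x z w : G} (h1 : x * (z * w) = 1) (h2 : x * z = 1) :
    w = 1 := by
  have h3 : w = (x * z)⁻¹ * (x * (z * w)) := by group
  rw [h1, h2] at h3
  simpa using h3

/-- Product of images of `b`'s is 1 if all factors are. -/
lemma pb_ones {i j : ℕ} (hi : 1 ≤ i)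
    (h : ∀ l, i ≤ l → l ≤ j → pr g t n (b g l) = 1) : pr g t n (prodb g i j) = 1 := by
  induction j with
  | zero => rw [prodb_empty (by omega)]; simp
  | succ j ih =>
    by_cases hij : i ≤ j + 1
    · rw [prodb_succ hij, map_mul, ih (fun l hl1 hl2 => h l hl1 (by omega)),
        h (j + 1) hij (le_refl _), one_mul]
    · rw [prodb_empty (by omega)]; simp

lemma pd_ones {i j : ℕ} (hj : 1 ≤ j)
    (h : ∀ l, j ≤ l → l ≤ i → pr g t n (a g l) = 1) : pr g t n (prodaDesc g i j) = 1 := by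
  induction i with
  | zero => rw [prodaDesc_empty (by omega)]; simp
  | succ i ih =>
    by_cases hij : j ≤ i + 1
    · rw [prodaDesc_succ hij, map_mul, h (i + 1) hij (le_refl _),
        ih (fun l hl1 hl2 => h l hl1 (by omega)), one_mul]
    · rw [prodaDesc_empty (by omega)]; simp

/-- Stage 1: `a_k = 1` in the quotient for `1 ≤ k ≤ t - 1`. -/
lemma A_small (hG : g = 4 * t ∨ g = 4 * t + 1) {k : ℕ} (h1 : 1 ≤ k) (h2 : k ≤ t - 1) :
    pr g t n (a g k) = 1 := by
  have ht : g / 2 = 2 * t := by omega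
  have e1 := pr_rel (mem_PhiOdd (g := g) (t := t) (n := n) h1 h2)
  have e2 := pr_rel (mem_PhiEven (g := g) (t := t) (n := n) h1 h2)
  simp only [map_mul] at e1 e2
  rw [pr_rel (mem_BoddC (n := n) ht h1 (by omega)), mul_one] at e1
  rw [pr_rel (mem_BevenC (n := n) ht h1 (by omega)), mul_one] at e2
  rw [prodaDesc_bot (show k ≤ t + 1 by omega), map_mul] at e1
  exact eq1_cancel e1 e2

/-- Stage 1: `a_t ^ n = 1` in the quotient. -/
lemma Atn (hG : g = 4 * t ∨ g = 4 * t + 1) (htp : 1 ≤ t) :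
    pr g t n (a g t) ^ n = 1 := by
  have ht : g / 2 = 2 * t := by omega
  have e1 := pr_rel (mem_PhiTw (g := g) (t := t) (n := n))
  rw [map_mul, pr_rel (mem_BoddC (n := n) ht htp (le_refl t)), mul_one, map_pow] at e1
  exact e1

lemma c_ones {i : ℕ} (hk : ∀ l, 1 ≤ l → l ≤ i → pr g t n (a g l) = 1) :
    pr g t n (c g i) = 1 := by
  induction i with
  | zero => rw [c_zero]; simp
  | succ i ih =>
    rw [c_succ]
    simp only [map_mul, map_inv]
    rw [hk (i + 1) (by omega) (le_refl _), ih (fun l hl1 hl2 => hk l hl1 (by omega))]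
    group

lemma pr_c_t (hG : g = 4 * t ∨ g = 4 * t + 1) (htp : 1 ≤ t) : pr g t n (c g t) = 1 :=
  pr_rel (mem_ct (by omega))

/-- Stage 2: `a_t` and `b_t` commute. -/
lemma comm_ab (hG : g = 4 * t ∨ g = 4 * t + 1) (htp : 1 ≤ t) :
    Commute (pr g t n (a g t)) (pr g t n (b g t)) := by
  have e := pr_c_t (n := n) hG htp
  rw [show t = (t - 1) + 1 by omega, c_succ, show t - 1 + 1 = t by omega] at e
  simp only [map_mul, map_inv] at e
  rw [c_ones (fun l hl1 hl2 => A_small hG hl1 (by omega))] at e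
  have h2 : pr g t n (a g t) * pr g t n (b g t) * (pr g t n (a g t))⁻¹ = pr g t n (b g t) := by
    calc pr g t n (a g t) * pr g t n (b g t) * (pr g t n (a g t))⁻¹
        = pr g t n (b g t) * ((pr g t n (b g t))⁻¹ * 1 *
            (pr g t n (a g t) * pr g t n (b g t) * (pr g t n (a g t))⁻¹)) := by group
      _ = pr g t n (b g t) := by rw [e]; group
  unfold Commute SemiconjBy
  calc pr g t n (a g t) * pr g t n (b g t)
      = pr g t n (a g t) * pr g t n (b g t) * (pr g t n (a g t))⁻¹ * pr g t n (a g t) := by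
        group
    _ = pr g t n (b g t) * pr g t n (a g t) := by rw [h2]

/-- Stage 2: `a_{t+1} = a_t⁻¹`. -/
lemma At1 (hG : g = 4 * t ∨ g = 4 * t + 1) (htp : 1 ≤ t) :
    pr g t n (a g (t + 1)) = (pr g t n (a g t))⁻¹ := by
  have ht : g / 2 = 2 * t := by omega
  have e := pr_rel (mem_BevenC (n := n) ht htp (le_refl t))
  simp only [Beven] at e
  rw [show 2 * t - t = t by omega, show 2 * t + 1 - t = t + 1 by omega,
    prodb_empty (by omega)] at e
  simp only [map_mul, map_one] at e
  rw [pr_c_t hG htp, mul_one, mul_one] at e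
  calc pr g t n (a g (t + 1))
      = (pr g t n (a g t))⁻¹ * (pr g t n (a g t) * pr g t n (a g (t + 1))) := by group
    _ = (pr g t n (a g t))⁻¹ := by rw [e]; group

/-- Stage 2: `b_{t+1} = b_t⁻¹`. -/
lemma Bt1 (hG : g = 4 * t ∨ g = 4 * t + 1) (htp : 1 ≤ t) :
    pr g t n (b g (t + 1)) = (pr g t n (b g t))⁻¹ := by
  have ht : g / 2 = 2 * t := by omega
  have e := pr_rel (mem_BoddC (n := n) ht htp (le_refl t))
  simp only [Bodd] at e
  rw [show 2 * t + 1 - t = t + 1 by omega, prodb_succ (by omega), prodb_single, c_succ] at e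
  simp only [map_mul, map_inv] at e
  rw [pr_c_t hG htp, At1 hG htp] at e
  have comm := comm_ab (n := n) hG htp
  have e2 : pr g t n (a g t) * pr g t n (b g t) * (pr g t n (a g t))⁻¹ *
      pr g t n (b g (t + 1)) = 1 := by
    rw [← e]; group
  have e3 : pr g t n (b g (t + 1)) =
      pr g t n (a g t) * (pr g t n (b g t))⁻¹ * (pr g t n (a g t))⁻¹ := by
    calc pr g t n (b g (t + 1))
        = (pr g t n (a g t) * pr g t n (b g t) * (pr g t n (a g t))⁻¹)⁻¹ *
          (pr g t n (a g t) * pr g t n (b g t) * (pr g t n (a g t))⁻¹ *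
            pr g t n (b g (t + 1))) := by group
      _ = (pr g t n (a g t) * pr g t n (b g t) * (pr g t n (a g t))⁻¹)⁻¹ * 1 := by rw [e2]
      _ = pr g t n (a g t) * (pr g t n (b g t))⁻¹ * (pr g t n (a g t))⁻¹ := by group
  rw [e3, comm.inv_right.eq]
  group

/-- Stage 2: `b_j = 1` for `t + 2 ≤ j ≤ 2t`. -/
lemma B_mid (hG : g = 4 * t ∨ g = 4 * t + 1) {j : ℕ} (h1 : t + 2 ≤ j) (h2 : j ≤ 2 * t) :
    pr g t n (b g j) = 1 := by
  have htp : 1 ≤ t := by omega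
  have ht : g / 2 = 2 * t := by omega
  set k := 2 * t + 1 - j with hk
  have hk1 : 1 ≤ k := by omega
  have hk2 : k ≤ t - 1 := by omega
  have e1 := pr_rel (mem_PhiOdd (g := g) (t := t) (n := n) hk1 hk2)
  simp only [map_mul] at e1
  rw [pr_rel (mem_BoddC (n := n) ht hk1 (by omega)), mul_one] at e1
  have hpd : pr g t n (prodaDesc g (t + 1) k) = 1 := by
    rw [prodaDesc_top (show k ≤ t + 1 by omega) (by omega), show t + 1 - 1 = t by omega,
      prodaDesc_top (show k ≤ t by omega) (by omega)]
    simp only [map_mul]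
    rw [At1 hG htp, pd_ones hk1 (fun l hl1 hl2 => A_small hG (by omega) (by omega))]
    group
  rw [hpd, mul_one, map_pow, Atn hG htp, mul_one, map_inv,
    show 2 * t + 1 - k = j by omega, inv_eq_one] at e1
  exact e1

/-- Stage 2: `c_i = 1` in the quotient for `t ≤ i ≤ 2t`. -/
lemma c_mid (hG : g = 4 * t ∨ g = 4 * t + 1) (htp : 1 ≤ t) {i : ℕ} (h1 : t ≤ i)
    (h2 : i ≤ 2 * t) : pr g t n (c g i) = 1 := by
  induction i, h1 using Nat.le_induction with
  | base => exact pr_c_t hG htp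
  | succ i hi ih =>
    by_cases hit : i = t
    · rw [hit, c_succ]
      simp only [map_mul, map_inv]
      rw [pr_c_t hG htp, At1 hG htp, Bt1 hG htp]
      have comm := comm_ab (n := n) hG htp
      have h3 : (pr g t n (a g t))⁻¹ * (pr g t n (b g t))⁻¹ * ((pr g t n (a g t))⁻¹)⁻¹ =
          (pr g t n (b g t))⁻¹ := by
        rw [comm.inv_left.inv_right.eq]
        group
      rw [h3]
      group
    · rw [c_succ]
      simp only [map_mul, map_inv]
      rw [B_mid hG (by omega) (by omega), ih (by omega)]
      group

/-- key consequence of `B^{2t}_{2k-1}` for `k ≤ t - 1`. -/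
lemma aux_e1 (hG : g = 4 * t ∨ g = 4 * t + 1) {k : ℕ} (h1 : 1 ≤ k) (h2 : k ≤ t - 1) :
    pr g t n (prodb g k (t - 1)) * pr g t n (a g (2 * t + 1 - k)) = 1 := by
  have htp : 1 ≤ t := by omega
  have ht : g / 2 = 2 * t := by omega
  have e := pr_rel (mem_BoddC (n := n) ht h1 (by omega))
  simp only [Bodd, map_mul] at e
  rw [A_small hG h1 h2, one_mul, c_mid hG htp (by omega) (by omega), mul_one] at e
  rw [prodb_split (show k ≤ (t - 1) + 1 by omega) (show t - 1 ≤ 2 * t + 1 - k by omega),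
    show t - 1 + 1 = t by omega,
    prodb_split (show t ≤ (t + 1) + 1 by omega) (show t + 1 ≤ 2 * t + 1 - k by omega),
    prodb_succ (show t ≤ t + 1 by omega), prodb_single] at e
  simp only [map_mul] at e
  rw [Bt1 hG htp, pb_ones (show 1 ≤ t + 2 by omega)
    (fun l hl1 hl2 => B_mid hG hl1 (by omega))] at e
  calc pr g t n (prodb g k (t - 1)) * pr g t n (a g (2 * t + 1 - k))
      = pr g t n (prodb g k (t - 1)) *
          (pr g t n (b g t) * (pr g t n (b g t))⁻¹ * 1) *
          pr g t n (a g (2 * t + 1 - k)) := by group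
    _ = 1 := e

/-- analogous consequence of `B^{2t}_{2k}` for `k ≤ t - 1`. -/
lemma aux_e2 (hG : g = 4 * t ∨ g = 4 * t + 1) {k : ℕ} (h1 : 1 ≤ k) (h2 : k ≤ t - 1) :
    pr g t n (prodb g (k + 1) (t - 1)) * pr g t n (a g (2 * t + 1 - k)) = 1 := by
  have htp : 1 ≤ t := by omega
  have ht : g / 2 = 2 * t := by omega
  have e := pr_rel (mem_BevenC (n := n) ht h1 (by omega))
  simp only [Beven, map_mul] at e
  rw [A_small hG h1 h2, one_mul, c_mid hG htp (by omega) (by omega), mul_one] at e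
  rw [prodb_split (show k + 1 ≤ (t - 1) + 1 by omega) (show t - 1 ≤ 2 * t - k by omega),
    show t - 1 + 1 = t by omega,
    prodb_split (show t ≤ (t + 1) + 1 by omega) (show t + 1 ≤ 2 * t - k by omega),
    prodb_succ (show t ≤ t + 1 by omega), prodb_single] at e
  simp only [map_mul] at e
  rw [Bt1 hG htp, pb_ones (show 1 ≤ t + 2 by omega)
    (fun l hl1 hl2 => B_mid hG hl1 (by omega))] at e
  calc pr g t n (prodb g (k + 1) (t - 1)) * pr g t n (a g (2 * t + 1 - k))
      = pr g t n (prodb g (k + 1) (t - 1)) *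
          (pr g t n (b g t) * (pr g t n (b g t))⁻¹ * 1) *
          pr g t n (a g (2 * t + 1 - k)) := by group
    _ = 1 := e

/-- Stage 2: `b_k = 1` for `1 ≤ k ≤ t - 1`. -/
lemma B_small (hG : g = 4 * t ∨ g = 4 * t + 1) {k : ℕ} (h1 : 1 ≤ k) (h2 : k ≤ t - 1) :
    pr g t n (b g k) = 1 := by
  have e1 := aux_e1 (n := n) hG h1 h2
  have e2 := aux_e2 (n := n) hG h1 h2
  rw [prodb_split (show k ≤ k + 1 by omega) (show k ≤ t - 1 by omega), prodb_single,
    map_mul] at e1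
  have e3 : pr g t n (b g k) *
      (pr g t n (prodb g (k + 1) (t - 1)) * pr g t n (a g (2 * t + 1 - k))) = 1 := by
    rw [← e1]; group
  rw [e2, mul_one] at e3
  exact e3

/-- Stage 2: `a_j = 1` for `t + 2 ≤ j ≤ 2t`. -/
lemma A_mid (hG : g = 4 * t ∨ g = 4 * t + 1) {j : ℕ} (h1 : t + 2 ≤ j) (h2 : j ≤ 2 * t) :
    pr g t n (a g j) = 1 := by
  have hk1 : (1 : ℕ) ≤ 2 * t + 1 - j := by omega
  have hk2 : 2 * t + 1 - j ≤ t - 1 := by omega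
  have e1 := aux_e1 (n := n) hG hk1 hk2
  have hpb : pr g t n (prodb g (2 * t + 1 - j) (t - 1)) = 1 :=
    pb_ones (by omega) (fun l hl1 hl2 => B_small hG (by omega) (by omega))
  rw [hpb, one_mul, show 2 * t + 1 - (2 * t + 1 - j) = j by omega] at e1
  exact e1

end Derive


section Stage3

variable {g t n : ℕ}

lemma conj_comm_eq {G : Type*} [Group G] {x y : G} (h : Commute x y) : x * y * x⁻¹ = y := by
  rw [h.eq]; group

lemma pb_1to2t (hG : g = 4 * t ∨ g = 4 * t + 1) (htp : 1 ≤ t) {k : ℕ} (h1 : 1 ≤ k)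
    (h2 : k ≤ 2 * t) (h3 : k ≠ t + 1) : pr g t n (prodb g k (2 * t)) = 1 := by
  have hb2 : pr g t n (prodb g (t + 2) (2 * t)) = 1 :=
    pb_ones (by omega) (fun l hl1 hl2 => B_mid hG (by omega) (by omega))
  rcases lt_trichotomy k t with hk | hk | hk
  · rw [prodb_split (show k ≤ (t - 1) + 1 by omega) (show t - 1 ≤ 2 * t by omega),
      show t - 1 + 1 = t by omega,
      prodb_split (show t ≤ (t + 1) + 1 by omega) (show t + 1 ≤ 2 * t by omega),
      prodb_succ (show t ≤ t + 1 by omega), prodb_single]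
    simp only [map_mul]
    rw [Bt1 hG htp,
      pb_ones (show 1 ≤ k by omega) (fun l hl1 hl2 => B_small hG (by omega) (by omega)), hb2]
    group
  · rw [hk, prodb_split (show t ≤ (t + 1) + 1 by omega) (show t + 1 ≤ 2 * t by omega),
      prodb_succ (show t ≤ t + 1 by omega), prodb_single]
    simp only [map_mul]
    rw [Bt1 hG htp, hb2]
    group
  · exact pb_ones (by omega) (fun l hl1 hl2 => B_mid hG (by omega) (by omega))

lemma cq_high (hG : g = 4 * t ∨ g = 4 * t + 1) (htp : 1 ≤ t) (j : ℕ) (hj : 2 * t ≤ j) :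
    pr g t n (c g j) = (pr g t n (prodb g (2 * t + 1) j))⁻¹ * pr g t n (dword g t j) := by
  induction j, hj using Nat.le_induction with
  | base =>
    rw [c_mid hG htp (by omega) (le_refl _), prodb_empty (by omega), dword_base]
    simp
  | succ j hj ih =>
    rw [c_succ, dword_succ hj, prodb_succ (by omega)]
    simp only [map_mul, map_inv]
    rw [ih]
    group

lemma pb_high (hG : g = 4 * t ∨ g = 4 * t + 1) (htp : 1 ≤ t) {i j : ℕ} (hi1 : 1 ≤ i)
    (hi2 : i ≤ 2 * t + 1) (hi3 : i ≠ t + 1) (hj : 2 * t ≤ j) :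
    pr g t n (prodb g i j) = pr g t n (prodb g (2 * t + 1) j) := by
  rcases eq_or_lt_of_le hi2 with he | hlt
  · rw [he]
  · rw [prodb_split (show i ≤ 2 * t + 1 by omega) hj, map_mul,
      pb_1to2t hG htp hi1 (by omega) hi3, one_mul]

lemma A_notmid (hG : g = 4 * t ∨ g = 4 * t + 1) {k : ℕ} (h1 : 1 ≤ k) (h2 : k ≤ 2 * t)
    (h3 : k ≠ t) (h4 : k ≠ t + 1) : pr g t n (a g k) = 1 := by
  rcases lt_trichotomy k t with hk | hk | hk
  · exact A_small hG h1 (by omega)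
  · exact absurd hk h3
  · exact A_mid hG (by omega) (by omega)

/-- The odd-index relations `O_j : D_j a_j = 1`. -/
lemma Olem (hG : g = 4 * t ∨ g = 4 * t + 1) (htp : 1 ≤ t) {k : ℕ} (h1 : 1 ≤ k)
    (h2 : k ≤ 2 * t) (h3 : k ≠ t) (h4 : k ≠ t + 1) :
    pr g t n (dword g t (g + 1 - k)) * pr g t n (a g (g + 1 - k)) = 1 := by
  have e := pr_rel (mem_BoddG (g := g) (t := t) (n := n) h1 (by omega))
  simp only [Bodd, map_mul] at e
  rw [A_notmid hG h1 h2 h3 h4, one_mul, cq_high hG htp _ (by omega),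
    pb_high hG htp (by omega) (by omega) h4 (by omega)] at e
  calc pr g t n (dword g t (g + 1 - k)) * pr g t n (a g (g + 1 - k))
      = pr g t n (prodb g (2 * t + 1) (g + 1 - k)) *
        ((pr g t n (prodb g (2 * t + 1) (g + 1 - k)))⁻¹ * pr g t n (dword g t (g + 1 - k))) *
        pr g t n (a g (g + 1 - k)) := by group
    _ = 1 := e

/-- The even-index relations `E_j : D_j a_{j+1} = 1`. -/
lemma Elem (hG : g = 4 * t ∨ g = 4 * t + 1) (htp : 1 ≤ t) {k : ℕ} (h1 : 1 ≤ k)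
    (h2 : k ≤ 2 * t) (h3 : k ≠ t) (h4 : k ≠ t + 1) :
    pr g t n (dword g t (g - k)) * pr g t n (a g (g + 1 - k)) = 1 := by
  have e := pr_rel (mem_BevenG (g := g) (t := t) (n := n) h1 (by omega))
  simp only [Beven, map_mul] at e
  rw [A_notmid hG h1 h2 h3 h4, one_mul, cq_high hG htp _ (by omega),
    pb_high hG htp (show 1 ≤ k + 1 by omega) (by omega) (by omega) (by omega)] at e
  calc pr g t n (dword g t (g - k)) * pr g t n (a g (g + 1 - k))
      = pr g t n (prodb g (2 * t + 1) (g - k)) *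
        ((pr g t n (prodb g (2 * t + 1) (g - k)))⁻¹ * pr g t n (dword g t (g - k))) *
        pr g t n (a g (g + 1 - k)) := by group
    _ = 1 := e

/-- For g odd, `b_{2t+1} = 1`. -/
lemma Bodd1 (hG : g = 4 * t ∨ g = 4 * t + 1) (htp : 1 ≤ t) (hodd : g = 4 * t + 1) :
    pr g t n (b g (2 * t + 1)) = 1 := by
  have ha := pr_rel (mem_aodd (g := g) (t := t) (n := n) hodd)
  have e := pr_rel (mem_BoddG (g := g) (t := t) (n := n) (k := 2 * t + 1) (by omega) (by omega))
  simp only [Bodd, map_mul] at e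
  rw [show g + 1 - (2 * t + 1) = 2 * t + 1 by omega] at e
  rw [ha, one_mul, mul_one, cq_high hG htp _ (by omega), dword_succ (le_refl _), dword_base,
    one_mul, prodb_single] at e
  simp only [map_mul, map_inv] at e
  rw [ha] at e
  calc pr g t n (b g (2 * t + 1))
      = pr g t n (b g (2 * t + 1)) *
        ((pr g t n (b g (2 * t + 1)))⁻¹ * (1 * pr g t n (b g (2 * t + 1)) * 1⁻¹)) := by group
    _ = 1 := e

/-- Lower chain. -/
lemma chain_low (hG : g = 4 * t ∨ g = 4 * t + 1) (htp : 1 ≤ t) :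
    ∀ j, 2 * t ≤ j → j ≤ g - t - 1 →
      pr g t n (dword g t j) = 1 ∧
        (2 * t + 1 ≤ j → pr g t n (a g j) = 1 ∧ pr g t n (b g j) = 1) := by
  intro j hj
  induction j, hj using Nat.le_induction with
  | base =>
    intro _
    refine ⟨by rw [dword_base, map_one], fun h => absurd h (by omega)⟩
  | succ j hj ih =>
    intro hle
    have hD : pr g t n (dword g t j) = 1 := (ih (by omega)).1
    have hA : pr g t n (a g (j + 1)) = 1 := by
      rcases hG with he | ho
      · have e := Elem (n := n) (Or.inl he) htp (k := g - j) (by omega) (by omega)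
          (by omega) (by omega)
        rw [show g - (g - j) = j by omega, show g + 1 - (g - j) = j + 1 by omega, hD,
          one_mul] at e
        exact e
      · rcases Nat.eq_or_lt_of_le hj with hj2t | hgt
        · rw [← hj2t]
          exact pr_rel (mem_aodd ho)
        · have e := Elem (n := n) (Or.inr ho) htp (k := g - j) (by omega) (by omega)
            (by omega) (by omega)
          rw [show g - (g - j) = j by omega, show g + 1 - (g - j) = j + 1 by omega, hD,
            one_mul] at e
          exact e
    have hDnext : pr g t n (dword g t (j + 1)) = 1 := by
      rcases hG with he | ho
      · have e := Olem (n := n) (Or.inl he) htp (k := g - j) (by omega) (by omega)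
          (by omega) (by omega)
        rw [show g + 1 - (g - j) = j + 1 by omega, hA, mul_one] at e
        exact e
      · rcases Nat.eq_or_lt_of_le hj with hj2t | hgt
        · rw [← hj2t, dword_succ (le_refl _), dword_base, one_mul]
          simp only [map_mul, map_inv]
          rw [pr_rel (mem_aodd ho), Bodd1 (Or.inr ho) htp ho]
          simp
        · have e := Olem (n := n) (Or.inr ho) htp (k := g - j) (by omega) (by omega)
            (by omega) (by omega)
          rw [show g + 1 - (g - j) = j + 1 by omega, hA, mul_one] at e
          exact e
    have hB : pr g t n (b g (j + 1)) = 1 := by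
      have h5 := hDnext
      rw [dword_succ hj] at h5
      simp only [map_mul, map_inv] at h5
      rw [hD, one_mul, hA] at h5
      simpa using h5
    exact ⟨hDnext, fun _ => ⟨hA, hB⟩⟩

end Stage3


section Middle

variable {g t n : ℕ}

/-- `D_{g-t-1} = 1`. -/
lemma D_pre (hG : g = 4 * t ∨ g = 4 * t + 1) (htp : 1 ≤ t) :
    pr g t n (dword g t (g - t - 1)) = 1 :=
  (chain_low hG htp (g - t - 1) (by omega) (le_refl _)).1

/-- `a_{g-t} = a_t`. -/
lemma A_gt (hG : g = 4 * t ∨ g = 4 * t + 1) (htp : 1 ≤ t) :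
    pr g t n (a g (g - t)) = pr g t n (a g t) := by
  have e := pr_rel (mem_BevenG (g := g) (t := t) (n := n) (k := t + 1) (by omega) (by omega))
  simp only [Beven, map_mul] at e
  rw [show g - (t + 1) = g - t - 1 by omega, show g + 1 - (t + 1) = g - t by omega,
    At1 hG htp, cq_high hG htp _ (by omega),
    pb_high hG htp (show 1 ≤ t + 2 by omega) (by omega) (by omega) (by omega),
    D_pre hG htp] at e
  calc pr g t n (a g (g - t))
      = pr g t n (a g t) *
        ((pr g t n (a g t))⁻¹ * pr g t n (prodb g (2 * t + 1) (g - t - 1)) *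
          ((pr g t n (prodb g (2 * t + 1) (g - t - 1)))⁻¹ * 1) * pr g t n (a g (g - t))) := by
        group
    _ = pr g t n (a g t) * 1 := by rw [e]
    _ = pr g t n (a g t) := mul_one _

/-- `D_{g-t} = a_t b_{g-t} a_t⁻¹` (expansion). -/
lemma D_gt_expand (hG : g = 4 * t ∨ g = 4 * t + 1) (htp : 1 ≤ t) :
    pr g t n (dword g t (g - t)) =
      pr g t n (a g t) * pr g t n (b g (g - t)) * (pr g t n (a g t))⁻¹ := by
  have h1 : pr g t n (dword g t ((g - t - 1) + 1)) =
      pr g t n (a g ((g - t - 1) + 1)) * pr g t n (b g ((g - t - 1) + 1)) *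
        (pr g t n (a g ((g - t - 1) + 1)))⁻¹ := by
    rw [dword_succ (by omega)]
    simp only [map_mul, map_inv]
    rw [D_pre hG htp, one_mul]
  rw [show g - t - 1 + 1 = g - t by omega] at h1
  rw [h1, A_gt hG htp]

/-- `b_{g-t} = b_t`. -/
lemma B_gt (hG : g = 4 * t ∨ g = 4 * t + 1) (htp : 1 ≤ t) :
    pr g t n (b g (g - t)) = pr g t n (b g t) := by
  have e := pr_rel (mem_BoddG (g := g) (t := t) (n := n) (k := t + 1) (by omega) (by omega))
  simp only [Bodd, map_mul] at e
  rw [show g + 1 - (t + 1) = g - t by omega, At1 hG htp, cq_high hG htp _ (by omega)] at e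
  have hpb : pr g t n (prodb g (t + 1) (g - t)) =
      (pr g t n (b g t))⁻¹ * pr g t n (prodb g (2 * t + 1) (g - t)) := by
    rw [prodb_split (show t + 1 ≤ (t + 1) + 1 by omega) (show t + 1 ≤ g - t by omega),
      prodb_single, map_mul, Bt1 hG htp,
      pb_high hG htp (show 1 ≤ t + 2 by omega) (by omega) (by omega) (by omega)]
  rw [hpb, D_gt_expand hG htp, A_gt hG htp] at e
  have e2 : (pr g t n (a g t))⁻¹ * (pr g t n (b g t))⁻¹ * pr g t n (a g t) *
      pr g t n (b g (g - t)) = 1 := by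
    rw [← e]; group
  have comm := comm_ab (n := n) hG htp
  have e3 : pr g t n (b g (g - t)) =
      (pr g t n (a g t))⁻¹ * pr g t n (b g t) * pr g t n (a g t) := by
    calc pr g t n (b g (g - t))
        = ((pr g t n (a g t))⁻¹ * (pr g t n (b g t))⁻¹ * pr g t n (a g t))⁻¹ *
          ((pr g t n (a g t))⁻¹ * (pr g t n (b g t))⁻¹ * pr g t n (a g t) *
            pr g t n (b g (g - t))) := by group
      _ = ((pr g t n (a g t))⁻¹ * (pr g t n (b g t))⁻¹ * pr g t n (a g t))⁻¹ * 1 := by rw [e2]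
      _ = (pr g t n (a g t))⁻¹ * pr g t n (b g t) * pr g t n (a g t) := by group
  rw [e3, comm.inv_left.eq]
  group

/-- `D_{g-t} = b_t`. -/
lemma D_gt (hG : g = 4 * t ∨ g = 4 * t + 1) (htp : 1 ≤ t) :
    pr g t n (dword g t (g - t)) = pr g t n (b g t) := by
  rw [D_gt_expand hG htp, B_gt hG htp, conj_comm_eq (comm_ab hG htp)]

/-- `a_{g+1-t} = a_t⁻¹`. -/
lemma A_gt1 (hG : g = 4 * t ∨ g = 4 * t + 1) (htp : 1 ≤ t) :
    pr g t n (a g (g + 1 - t)) = (pr g t n (a g t))⁻¹ := by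
  have e := pr_rel (mem_BevenG (g := g) (t := t) (n := n) (k := t) htp (by omega))
  simp only [Beven, map_mul] at e
  rw [show g - t = g - t by rfl, cq_high hG htp _ (by omega)] at e
  have hpb : pr g t n (prodb g (t + 1) (g - t)) =
      (pr g t n (b g t))⁻¹ * pr g t n (prodb g (2 * t + 1) (g - t)) := by
    rw [prodb_split (show t + 1 ≤ (t + 1) + 1 by omega) (show t + 1 ≤ g - t by omega),
      prodb_single, map_mul, Bt1 hG htp,
      pb_high hG htp (show 1 ≤ t + 2 by omega) (by omega) (by omega) (by omega)]
  rw [hpb, D_gt hG htp] at e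
  have e2 : pr g t n (a g t) * pr g t n (a g (g + 1 - t)) = 1 := by
    rw [← e]; group
  calc pr g t n (a g (g + 1 - t))
      = (pr g t n (a g t))⁻¹ * (pr g t n (a g t) * pr g t n (a g (g + 1 - t))) := by group
    _ = (pr g t n (a g t))⁻¹ := by rw [e2, mul_one]

/-- `D_{g+1-t} = b_t (a_t⁻¹ b_{g+1-t} a_t)` (expansion). -/
lemma D_gt1_expand (hG : g = 4 * t ∨ g = 4 * t + 1) (htp : 1 ≤ t) :
    pr g t n (dword g t (g + 1 - t)) =
      pr g t n (b g t) *
        ((pr g t n (a g t))⁻¹ * pr g t n (b g (g + 1 - t)) * pr g t n (a g t)) := by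
  have h1 : pr g t n (dword g t ((g - t) + 1)) =
      pr g t n (dword g t (g - t)) *
        (pr g t n (a g ((g - t) + 1)) * pr g t n (b g ((g - t) + 1)) *
          (pr g t n (a g ((g - t) + 1)))⁻¹) := by
    rw [dword_succ (by omega)]
    simp only [map_mul, map_inv]
  rw [show g - t + 1 = g + 1 - t by omega] at h1
  rw [h1, D_gt hG htp, A_gt1 hG htp]
  group

/-- `b_{g+1-t} = b_t⁻¹`. -/
lemma B_gt1 (hG : g = 4 * t ∨ g = 4 * t + 1) (htp : 1 ≤ t) :
    pr g t n (b g (g + 1 - t)) = (pr g t n (b g t))⁻¹ := by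
  have e := pr_rel (mem_BoddG (g := g) (t := t) (n := n) (k := t) htp (by omega))
  simp only [Bodd, map_mul] at e
  rw [cq_high hG htp _ (by omega)] at e
  have hpb : pr g t n (prodb g t (g + 1 - t)) =
      pr g t n (b g t) * (pr g t n (b g t))⁻¹ * pr g t n (prodb g (2 * t + 1) (g + 1 - t)) := by
    rw [prodb_split (show t ≤ t + 1 by omega) (show t ≤ g + 1 - t by omega), prodb_single,
      map_mul, prodb_split (show t + 1 ≤ (t + 1) + 1 by omega)
        (show t + 1 ≤ g + 1 - t by omega), prodb_single, map_mul, Bt1 hG htp,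
      pb_high hG htp (show 1 ≤ t + 2 by omega) (by omega) (by omega) (by omega)]
    group
  rw [hpb, D_gt1_expand hG htp, A_gt1 hG htp] at e
  have comm := comm_ab (n := n) hG htp
  have e2 : pr g t n (a g t) * pr g t n (b g t) * (pr g t n (a g t))⁻¹ *
      pr g t n (b g (g + 1 - t)) = 1 := by
    rw [← e]; group
  rw [conj_comm_eq comm] at e2
  calc pr g t n (b g (g + 1 - t))
      = (pr g t n (b g t))⁻¹ * (pr g t n (b g t) * pr g t n (b g (g + 1 - t))) := by group
    _ = (pr g t n (b g t))⁻¹ := by rw [e2, mul_one]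

/-- `D_{g+1-t} = 1`. -/
lemma D_gt1 (hG : g = 4 * t ∨ g = 4 * t + 1) (htp : 1 ≤ t) :
    pr g t n (dword g t (g + 1 - t)) = 1 := by
  rw [D_gt1_expand hG htp, B_gt1 hG htp, (comm_ab (n := n) hG htp).inv_left.inv_right.eq]
  group

/-- Upper chain. -/
lemma chain_up (hG : g = 4 * t ∨ g = 4 * t + 1) (htp : 1 ≤ t) :
    ∀ j, g + 1 - t ≤ j → j ≤ g →
      pr g t n (dword g t j) = 1 ∧
        (g + 2 - t ≤ j → pr g t n (a g j) = 1 ∧ pr g t n (b g j) = 1) := by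
  intro j hj
  induction j, hj using Nat.le_induction with
  | base =>
    intro _
    exact ⟨D_gt1 hG htp, fun h => absurd h (by omega)⟩
  | succ j hj ih =>
    intro hle
    have hD : pr g t n (dword g t j) = 1 := (ih (by omega)).1
    have hA : pr g t n (a g (j + 1)) = 1 := by
      have e := Elem (n := n) hG htp (k := g - j) (by omega) (by omega) (by omega) (by omega)
      rw [show g - (g - j) = j by omega, show g + 1 - (g - j) = j + 1 by omega, hD,
        one_mul] at e
      exact e
    have hDnext : pr g t n (dword g t (j + 1)) = 1 := by
      have e := Olem (n := n) hG htp (k := g - j) (by omega) (by omega) (by omega) (by omega)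
      rw [show g + 1 - (g - j) = j + 1 by omega, hA, mul_one] at e
      exact e
    have hB : pr g t n (b g (j + 1)) = 1 := by
      have h5 := hDnext
      rw [dword_succ (by omega)] at h5
      simp only [map_mul, map_inv] at h5
      rw [hD, one_mul, hA] at h5
      simpa using h5
    exact ⟨hDnext, fun _ => ⟨hA, hB⟩⟩

end Middle

section ValueTable

/-- exponent profile of the generators in the quotient. -/
def eZ (g t ι : ℕ) : ℤ :=
  (if ι = t then 1 else 0) + (if ι = g - t then 1 else 0)
    - (if ι = t + 1 then 1 else 0) - (if ι = g + 1 - t then 1 else 0)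

variable {g t n : ℕ}

/-- The value table for the `a`-generators. -/
lemma A_val (hG : g = 4 * t ∨ g = 4 * t + 1) (htp : 1 ≤ t) {ι : ℕ} (h1 : 1 ≤ ι)
    (h2 : ι ≤ g) : pr g t n (a g ι) = pr g t n (a g t) ^ (eZ g t ι) := by
  by_cases c1 : ι = t
  · rw [show eZ g t ι = 1 by unfold eZ; split_ifs <;> omega, zpow_one, c1]
  by_cases c2 : ι = t + 1
  · rw [show eZ g t ι = -1 by unfold eZ; split_ifs <;> omega, zpow_neg, zpow_one, c2,
      At1 hG htp]
  by_cases c3 : ι = g - t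
  · rw [show eZ g t ι = 1 by unfold eZ; split_ifs <;> omega, zpow_one, c3, A_gt hG htp]
  by_cases c4 : ι = g + 1 - t
  · rw [show eZ g t ι = -1 by unfold eZ; split_ifs <;> omega, zpow_neg, zpow_one, c4,
      A_gt1 hG htp]
  rw [show eZ g t ι = 0 by unfold eZ; split_ifs <;> omega, zpow_zero]
  rcases lt_trichotomy ι (2 * t + 1) with hι | hι | hι
  · exact A_notmid hG h1 (by omega) c1 c2
  · exact ((chain_low hG htp ι (by omega) (by omega)).2 (by omega)).1
  · rcases le_or_gt ι (g - t - 1) with hι2 | hι2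
    · exact ((chain_low hG htp ι (by omega) (by omega)).2 (by omega)).1
    · exact ((chain_up hG htp ι (by omega) (by omega)).2 (by omega)).1

lemma B_notmid (hG : g = 4 * t ∨ g = 4 * t + 1) {k : ℕ} (h1 : 1 ≤ k) (h2 : k ≤ 2 * t)
    (h3 : k ≠ t) (h4 : k ≠ t + 1) : pr g t n (b g k) = 1 := by
  rcases lt_trichotomy k t with hk | hk | hk
  · exact B_small hG h1 (by omega)
  · exact absurd hk h3
  · exact B_mid hG (by omega) (by omega)

/-- The value table for the `b`-generators. -/
lemma B_val (hG : g = 4 * t ∨ g = 4 * t + 1) (htp : 1 ≤ t) {ι : ℕ} (h1 : 1 ≤ ι)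
    (h2 : ι ≤ g) : pr g t n (b g ι) = pr g t n (b g t) ^ (eZ g t ι) := by
  by_cases c1 : ι = t
  · rw [show eZ g t ι = 1 by unfold eZ; split_ifs <;> omega, zpow_one, c1]
  by_cases c2 : ι = t + 1
  · rw [show eZ g t ι = -1 by unfold eZ; split_ifs <;> omega, zpow_neg, zpow_one, c2,
      Bt1 hG htp]
  by_cases c3 : ι = g - t
  · rw [show eZ g t ι = 1 by unfold eZ; split_ifs <;> omega, zpow_one, c3, B_gt hG htp]
  by_cases c4 : ι = g + 1 - t
  · rw [show eZ g t ι = -1 by unfold eZ; split_ifs <;> omega, zpow_neg, zpow_one, c4,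
      B_gt1 hG htp]
  rw [show eZ g t ι = 0 by unfold eZ; split_ifs <;> omega, zpow_zero]
  rcases lt_trichotomy ι (2 * t + 1) with hι | hι | hι
  · exact B_notmid hG h1 (by omega) c1 c2
  · rcases hG with he | ho
    · exact ((chain_low (Or.inl he) htp ι (by omega) (by omega)).2 (by omega)).2
    · rw [hι]; exact Bodd1 (Or.inr ho) htp ho
  · rcases le_or_gt ι (g - t - 1) with hι2 | hι2
    · exact ((chain_low hG htp ι (by omega) (by omega)).2 (by omega)).2
    · exact ((chain_up hG htp ι (by omega) (by omega)).2 (by omega)).2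

end ValueTable


section PhiDef

/-- The abelian target group. -/
abbrev M (n : ℕ) := Multiplicative ℤ × Multiplicative (ZMod n)

/-- The homomorphism from the free group to `ℤ × ℤ/n`. -/
def phiF (g t n : ℕ) : F g →* M n :=
  FreeGroup.lift fun x =>
    if x.2 then ((Multiplicative.ofAdd (eZ g t (x.1.1 + 1)), 1) : M n)
    else (1, Multiplicative.ofAdd ((eZ g t (x.1.1 + 1) : ℤ) : ZMod n))

variable {g t n : ℕ}

lemma eZ_oob (hG : g = 4 * t ∨ g = 4 * t + 1) (htp : 1 ≤ t) {ι : ℕ}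
    (h : ι = 0 ∨ g < ι) : eZ g t ι = 0 := by
  unfold eZ; split_ifs <;> omega

lemma phi_a (hG : g = 4 * t ∨ g = 4 * t + 1) (htp : 1 ≤ t) (ι : ℕ) :
    phiF g t n (a g ι) = (1, Multiplicative.ofAdd ((eZ g t ι : ℤ) : ZMod n)) := by
  unfold a
  split_ifs with h
  · show phiF g t n (FreeGroup.of _) = _
    rw [phiF, FreeGroup.lift_apply_of, if_neg (by simp), show ι - 1 + 1 = ι by omega]
  · rw [map_one, eZ_oob hG htp (by omega)]
    simp
    rfl

lemma phi_b (hG : g = 4 * t ∨ g = 4 * t + 1) (htp : 1 ≤ t) (ι : ℕ) :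
    phiF g t n (b g ι) = (Multiplicative.ofAdd (eZ g t ι), 1) := by
  unfold b
  split_ifs with h
  · show phiF g t n (FreeGroup.of _) = _
    rw [phiF, FreeGroup.lift_apply_of, if_pos (by simp), show ι - 1 + 1 = ι by omega]
  · rw [map_one, eZ_oob hG htp (by omega)]
    simp
    rfl

lemma phi_c (hG : g = 4 * t ∨ g = 4 * t + 1) (htp : 1 ≤ t) (i : ℕ) :
    phiF g t n (c g i) = 1 := by
  induction i with
  | zero => rw [c_zero, map_one]
  | succ i ih =>
    rw [c_succ]
    simp only [map_mul, map_inv]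
    rw [ih, mul_one, conj_comm_eq (Commute.all _ _), inv_mul_cancel]

lemma phi_pblist (hG : g = 4 * t ∨ g = 4 * t + 1) (htp : 1 ≤ t) (i : ℕ) (m : ℕ) :
    phiF g t n (((List.range m).map fun l => b g (i + l)).prod) =
      (Multiplicative.ofAdd (∑ l ∈ Finset.range m, eZ g t (i + l)), 1) := by
  induction m with
  | zero => simp; rfl
  | succ m ih =>
    rw [List.range_succ, List.map_append, List.prod_append, map_mul, ih]
    simp only [List.map_cons, List.map_nil, List.prod_cons, List.prod_nil, mul_one]
    rw [phi_b hG htp, Finset.sum_range_succ, Prod.mk_mul_mk, mul_one, ← ofAdd_add]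

lemma phi_prodb (hG : g = 4 * t ∨ g = 4 * t + 1) (htp : 1 ≤ t) (i j : ℕ) :
    phiF g t n (prodb g i j) =
      (Multiplicative.ofAdd (∑ l ∈ Finset.range (j + 1 - i), eZ g t (i + l)), 1) :=
  phi_pblist hG htp i (j + 1 - i)

lemma phi_pdlist (hG : g = 4 * t ∨ g = 4 * t + 1) (htp : 1 ≤ t) (i : ℕ) (m : ℕ) :
    phiF g t n (((List.range m).map fun l => a g (i - l)).prod) =
      (1, Multiplicative.ofAdd (((∑ l ∈ Finset.range m, eZ g t (i - l) : ℤ) : ZMod n))) := by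
  induction m with
  | zero => simp; rfl
  | succ m ih =>
    rw [List.range_succ, List.map_append, List.prod_append, map_mul, ih]
    simp only [List.map_cons, List.map_nil, List.prod_cons, List.prod_nil, mul_one]
    rw [phi_a hG htp, Finset.sum_range_succ, Prod.mk_mul_mk, mul_one, Int.cast_add,
      ← ofAdd_add]

lemma phi_pd (hG : g = 4 * t ∨ g = 4 * t + 1) (htp : 1 ≤ t) (i j : ℕ) :
    phiF g t n (prodaDesc g i j) =
      (1, Multiplicative.ofAdd (((∑ l ∈ Finset.range (i + 1 - j), eZ g t (i - l) : ℤ) :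
        ZMod n))) :=
  phi_pdlist hG htp i (i + 1 - j)

lemma sum_ind_asc (p i : ℕ) (m : ℕ) :
    (∑ l ∈ Finset.range m, if i + l = p then (1 : ℤ) else 0) =
      if i ≤ p ∧ p < i + m then 1 else 0 := by
  induction m with
  | zero => simp only [Finset.range_zero, Finset.sum_empty]; rw [if_neg (by omega)]
  | succ m ih =>
    rw [Finset.sum_range_succ, ih]
    split_ifs <;> omega

lemma sum_ind_desc (p i : ℕ) (hp : 1 ≤ p) (m : ℕ) :
    (∑ l ∈ Finset.range m, if i - l = p then (1 : ℤ) else 0) =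
      if p ≤ i ∧ i < p + m then 1 else 0 := by
  induction m with
  | zero => simp only [Finset.range_zero, Finset.sum_empty]; rw [if_neg (by omega)]
  | succ m ih =>
    rw [Finset.sum_range_succ, ih]
    split_ifs <;> omega

lemma sum_eZ_asc (hG : g = 4 * t ∨ g = 4 * t + 1) (htp : 1 ≤ t) (i m : ℕ) :
    ∑ l ∈ Finset.range m, eZ g t (i + l) =
      ((if i ≤ t ∧ t < i + m then 1 else 0) + (if i ≤ g - t ∧ g - t < i + m then 1 else 0)
        - (if i ≤ t + 1 ∧ t + 1 < i + m then 1 else 0)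
        - (if i ≤ g + 1 - t ∧ g + 1 - t < i + m then 1 else 0) : ℤ) := by
  unfold eZ
  rw [← sum_ind_asc t i m, ← sum_ind_asc (g - t) i m, ← sum_ind_asc (t + 1) i m,
    ← sum_ind_asc (g + 1 - t) i m]
  rw [Finset.sum_sub_distrib, Finset.sum_sub_distrib, Finset.sum_add_distrib]

lemma sum_eZ_desc (hG : g = 4 * t ∨ g = 4 * t + 1) (htp : 1 ≤ t) (i m : ℕ) :
    ∑ l ∈ Finset.range m, eZ g t (i - l) =
      ((if t ≤ i ∧ i < t + m then 1 else 0) + (if g - t ≤ i ∧ i < g - t + m then 1 else 0)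
        - (if t + 1 ≤ i ∧ i < t + 1 + m then 1 else 0)
        - (if g + 1 - t ≤ i ∧ i < g + 1 - t + m then 1 else 0) : ℤ) := by
  unfold eZ
  rw [← sum_ind_desc t i htp m, ← sum_ind_desc (g - t) i (by omega) m,
    ← sum_ind_desc (t + 1) i (by omega) m, ← sum_ind_desc (g + 1 - t) i (by omega) m]
  rw [Finset.sum_sub_distrib, Finset.sum_sub_distrib, Finset.sum_add_distrib]

end PhiDef


section PhiRel

variable {g t n : ℕ}

lemma pair_eq_one {x : ℤ} {y : ZMod n} (hx : x = 0) (hy : y = 0) :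
    ((Multiplicative.ofAdd x, Multiplicative.ofAdd y) : M n) = 1 := by
  rw [hx, hy]; rfl

set_option maxHeartbeats 1000000 in
lemma phi_Bodd (hG : g = 4 * t ∨ g = 4 * t + 1) (htp : 1 ≤ t) {h k : ℕ}
    (hc : (h = g ∨ h = 2 * t) ∧ 1 ≤ k ∧ 2 * k - 1 ≤ h) : phiF g t n (Bodd g h k) = 1 := by
  unfold Bodd
  simp only [map_mul, phi_a hG htp, phi_c hG htp, phi_prodb hG htp, Prod.mk_mul_mk, one_mul,
    mul_one, ← ofAdd_add, ← Int.cast_add]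
  refine pair_eq_one ?_ ?_
  · rw [sum_eZ_asc hG htp]
    split_ifs <;> omega
  · have hz : eZ g t k + eZ g t (h + 1 - k) = 0 := by
      unfold eZ; split_ifs <;> omega
    rw [hz, Int.cast_zero]

set_option maxHeartbeats 1000000 in
lemma phi_Beven (hG : g = 4 * t ∨ g = 4 * t + 1) (htp : 1 ≤ t) {h k : ℕ}
    (hc : (h = g ∨ h = 2 * t) ∧ 1 ≤ k ∧ 2 * k ≤ h) : phiF g t n (Beven g h k) = 1 := by
  unfold Beven
  simp only [map_mul, phi_a hG htp, phi_c hG htp, phi_prodb hG htp, Prod.mk_mul_mk, one_mul,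
    mul_one, ← ofAdd_add, ← Int.cast_add]
  refine pair_eq_one ?_ ?_
  · rw [sum_eZ_asc hG htp]
    split_ifs <;> omega
  · have hz : eZ g t k + eZ g t (h + 1 - k) = 0 := by
      unfold eZ; split_ifs <;> omega
    rw [hz, Int.cast_zero]

set_option maxHeartbeats 1000000 in
lemma phi_B0 (hG : g = 4 * t ∨ g = 4 * t + 1) (htp : 1 ≤ t) {s h : ℕ}
    (hh : h = g ∨ h = 2 * t) (hs2 : s ≠ 1 → g = 4 * t + 1 ∧ h = 2 * t) :
    phiF g t n (B0 g s h) = 1 := by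
  have hx : ∑ l ∈ Finset.range (h + 1 - 1), eZ g t (1 + l) = 0 := by
    rw [sum_eZ_asc hG htp]
    split_ifs <;> omega
  by_cases hs : s = 1
  · rw [B0, if_pos hs, B01, phi_prodb hG htp]
    exact pair_eq_one hx rfl
  · rw [B0, if_neg hs, B02]
    simp only [map_mul, phi_a hG htp, phi_c hG htp, phi_prodb hG htp, Prod.mk_mul_mk,
      one_mul, mul_one]
    refine pair_eq_one hx ?_
    obtain ⟨ho, hh2⟩ := hs2 hs
    have hz : eZ g t (h + 1) = 0 := by
      unfold eZ; split_ifs <;> omega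
    rw [hz, Int.cast_zero]


lemma nsmul_zmod_self (x : ZMod n) : n • x = 0 := by
  rw [nsmul_eq_mul, ZMod.natCast_self, zero_mul]

lemma phi_atn (hG : g = 4 * t ∨ g = 4 * t + 1) (htp : 1 ≤ t) :
    phiF g t n (a g t ^ n) = 1 := by
  rw [map_pow, phi_a hG htp, Prod.pow_mk, one_pow, ← ofAdd_nsmul, nsmul_zmod_self]
  rfl

lemma phi_pd_t1 (hG : g = 4 * t ∨ g = 4 * t + 1) (htp : 1 ≤ t) {j : ℕ} (h1 : 1 ≤ j)
    (h2 : j ≤ t) : phiF g t n (prodaDesc g (t + 1) j) = 1 := by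
  rw [phi_pd hG htp]
  have hz : ∑ l ∈ Finset.range (t + 1 + 1 - j), eZ g t (t + 1 - l) = 0 := by
    rw [sum_eZ_desc hG htp]; split_ifs <;> omega
  rw [hz, Int.cast_zero]
  rfl

lemma phi_pd_low (hG : g = 4 * t ∨ g = 4 * t + 1) (htp : 1 ≤ t) :
    phiF g t n (prodaDesc g (t - 1) 1) = 1 := by
  rw [phi_pd hG htp]
  have hz : ∑ l ∈ Finset.range (t - 1 + 1 - 1), eZ g t (t - 1 - l) = 0 := by
    rw [sum_eZ_desc hG htp]; split_ifs <;> omega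
  rw [hz, Int.cast_zero]
  rfl

set_option maxHeartbeats 2000000 in
/-- φ kills every relator. -/
lemma phi_rel (hG : g = 4 * t ∨ g = 4 * t + 1) (htp : 1 ≤ t) {w : F g}
    (hw : w ∈ Sfull g t n) : phiF g t n w = 1 := by
  have ht2 : g / 2 = 2 * t := by omega
  rcases hw with (hw | hw) | hw
  · -- Bset g 1 g
    rcases hw with ((hw | hw) | hw) | hw
    · rw [Set.mem_singleton_iff] at hw; subst hw
      exact phi_B0 hG htp (Or.inl rfl) (fun h => absurd rfl h)
    · obtain ⟨k, h1, h2, rfl⟩ := hw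
      exact phi_Bodd hG htp ⟨Or.inl rfl, h1, h2⟩
    · obtain ⟨k, h1, h2, rfl⟩ := hw
      exact phi_Beven hG htp ⟨Or.inl rfl, h1, h2⟩
    · by_cases hpar : g % 2 = 1
      · rw [if_pos hpar] at hw
        simp only [Set.mem_insert_iff, Set.mem_singleton_iff] at hw
        have hz : eZ g t (g / 2 + 1) = 0 := by unfold eZ; split_ifs <;> omega
        rcases hw with rfl | rfl
        · rw [phi_a hG htp, hz, Int.cast_zero]
          rfl
        · rw [map_mul, phi_c hG htp, phi_a hG htp, one_mul, hz, Int.cast_zero]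
          rfl
      · rw [if_neg hpar] at hw
        exact absurd hw (Set.notMem_empty _)
  · -- Cset
    rw [Cset, ht2] at hw
    rcases hw with hw | hw
    · rcases hw with ((hw | hw) | hw) | hw
      · rw [Set.mem_singleton_iff] at hw; subst hw
        refine phi_B0 hG htp (Or.inr rfl) (fun hs => ?_)
        by_cases hpar : g % 2 = 0
        · exact absurd (if_pos hpar) hs
        · exact ⟨by omega, rfl⟩
      · obtain ⟨k, h1, h2, rfl⟩ := hw
        exact phi_Bodd hG htp ⟨Or.inr rfl, h1, h2⟩
      · obtain ⟨k, h1, h2, rfl⟩ := hw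
        exact phi_Beven hG htp ⟨Or.inr rfl, h1, h2⟩
      · rw [if_neg (by omega)] at hw
        exact absurd hw (Set.notMem_empty _)
    · rw [if_pos (by omega : 2 * t % 2 = 0), show 2 * t / 2 = t from by omega,
        Set.mem_singleton_iff] at hw
      subst hw
      exact phi_c hG htp t
  · -- Phi
    rcases hw with ((hw | hw) | hw) | hw
    · rw [Set.mem_singleton_iff] at hw; subst hw
      rw [map_mul, map_mul, phi_atn hG htp, one_mul, phi_pd_low hG htp, one_mul]
      refine phi_B0 hG htp (Or.inr rfl) (fun hs => ?_)
      by_cases hpar : g % 2 = 0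
      · exact absurd (if_pos hpar) hs
      · exact ⟨by omega, rfl⟩
    · obtain ⟨k, h1, h2, rfl⟩ := hw
      rw [map_mul, map_mul, map_mul, phi_atn hG htp, mul_one,
        phi_pd_t1 hG htp h1 (by omega), mul_one,
        phi_Bodd hG htp ⟨Or.inr rfl, h1, by omega⟩, mul_one, map_inv, phi_b hG htp]
      have hz : eZ g t (2 * t + 1 - k) = 0 := by unfold eZ; split_ifs <;> omega
      rw [hz]
      simp
    · obtain ⟨k, h1, h2, rfl⟩ := hw
      rw [map_mul, map_mul, map_mul, phi_atn hG htp, mul_one,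
        phi_pd_t1 hG htp (show 1 ≤ k + 1 by omega) (by omega), mul_one,
        phi_Beven hG htp ⟨Or.inr rfl, h1, by omega⟩, mul_one, map_inv, phi_b hG htp]
      have hz : eZ g t (2 * t + 1 - k) = 0 := by unfold eZ; split_ifs <;> omega
      rw [hz]
      simp
    · simp only [Set.mem_insert_iff, Set.mem_singleton_iff] at hw
      rcases hw with rfl | rfl | rfl
      · rw [map_mul, phi_atn hG htp, one_mul]
        exact phi_Bodd hG htp ⟨Or.inr rfl, htp, by omega⟩
      · exact phi_Beven hG htp ⟨Or.inr rfl, htp, by omega⟩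
      · exact phi_c hG htp t

end PhiRel


section Final

variable {g t n : ℕ}

/-- The descended homomorphism on the quotient. -/
def phiBar (g t n : ℕ) (hG : g = 4 * t ∨ g = 4 * t + 1) (htp : 1 ≤ t) :
    Qgrp g t n →* M n := by
  have h1 : ∀ r ∈ ({c g g} : Set (F g)), FreeGroup.lift (fun x : Fin g × Bool =>
      if x.2 then ((Multiplicative.ofAdd (eZ g t (x.1.1 + 1)), 1) : M n)
      else (1, Multiplicative.ofAdd ((eZ g t (x.1.1 + 1) : ℤ) : ZMod n))) r = 1 := by
    intro r hr
    rw [Set.mem_singleton_iff] at hr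
    subst hr
    exact phi_c hG htp g
  refine QuotientGroup.lift _ (PresentedGroup.toGroup h1) ?_
  intro x hx
  have hker : Subgroup.normalClosure (toPi g '' Sfull g t n) ≤
      (PresentedGroup.toGroup h1).ker := by
    refine Subgroup.normalClosure_le_normal ?_
    rintro y ⟨w, hw, rfl⟩
    have he : (PresentedGroup.toGroup h1) (toPi g w) = phiF g t n w := rfl
    exact MonoidHom.mem_ker.mpr (he.trans (phi_rel hG htp hw))
  exact MonoidHom.mem_ker.mp (hker hx)

lemma phiBar_pr (hG : g = 4 * t ∨ g = 4 * t + 1) (htp : 1 ≤ t) (w : F g) :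
    phiBar g t n hG htp (pr g t n w) = phiF g t n w := rfl

/-- The reverse homomorphism on the `ZMod` factor. -/
def psi2 (g t n : ℕ) (hG : g = 4 * t ∨ g = 4 * t + 1) (htp : 1 ≤ t) :
    Multiplicative (ZMod n) →* Qgrp g t n :=
  AddMonoidHom.toMultiplicativeLeft
    (ZMod.lift n ⟨zmultiplesHom _ (Additive.ofMul (pr g t n (a g t))), by
      show (n : ℤ) • Additive.ofMul (pr g t n (a g t)) = 0
      rw [← ofMul_zpow, zpow_natCast, Atn hG htp]
      rfl⟩)

lemma psi2_apply (hG : g = 4 * t ∨ g = 4 * t + 1) (htp : 1 ≤ t) (k : ℤ) :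
    psi2 g t n hG htp (Multiplicative.ofAdd ((k : ZMod n))) = pr g t n (a g t) ^ k := by
  unfold psi2
  rw [AddMonoidHom.coe_toMultiplicativeLeft, Function.comp_apply, Function.comp_apply, toAdd_ofAdd, ZMod.lift_coe,
    zmultiplesHom_apply, ← ofMul_zpow, toMul_ofMul]

/-- The reverse homomorphism. -/
def psiH (g t n : ℕ) (hG : g = 4 * t ∨ g = 4 * t + 1) (htp : 1 ≤ t) :
    M n →* Qgrp g t n :=
  (zpowersHom (Qgrp g t n) (pr g t n (b g t))).noncommCoprod (psi2 g t n hG htp) (by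
    intro x y
    obtain ⟨k, hk⟩ := ZMod.intCast_surjective (Multiplicative.toAdd y)
    have hy : y = Multiplicative.ofAdd ((k : ZMod n)) := by
      rw [hk, ofAdd_toAdd]
    rw [hy, psi2_apply hG htp, zpowersHom_apply]
    exact (comm_ab hG htp).symm.zpow_zpow _ _)

lemma prod_zpow {G H : Type*} [Group G] [Group H] (p : G × H) (k : ℤ) :
    p ^ k = (p.1 ^ k, p.2 ^ k) := rfl

lemma eZ_t (hG : g = 4 * t ∨ g = 4 * t + 1) (htp : 1 ≤ t) : eZ g t t = 1 := by
  unfold eZ; split_ifs <;> omega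

lemma a_of (hG : g = 4 * t ∨ g = 4 * t + 1) (htp : 1 ≤ t) (i : Fin g) :
    FreeGroup.of ((i, false) : Fin g × Bool) = a g (i.1 + 1) := by
  rw [a, dif_pos ⟨by omega, by omega⟩]
  congr

lemma b_of (hG : g = 4 * t ∨ g = 4 * t + 1) (htp : 1 ≤ t) (i : Fin g) :
    FreeGroup.of ((i, true) : Fin g × Bool) = b g (i.1 + 1) := by
  rw [b, dif_pos ⟨by omega, by omega⟩]
  congr

lemma pr_surjective (g t n : ℕ) : Function.Surjective (pr g t n) := by
  have h1 : Function.Surjective (projBy g (Sfull g t n)) := QuotientGroup.mk'_surjective _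
  have h2 : Function.Surjective (toPi g) := PresentedGroup.mk_surjective _
  exact h1.comp h2

/-- `ψ ∘ φ̄ = id`. -/
lemma psi_phiBar (hG : g = 4 * t ∨ g = 4 * t + 1) (htp : 1 ≤ t) :
    (psiH g t n hG htp).comp (phiBar g t n hG htp) = MonoidHom.id _ := by
  have key : ((psiH g t n hG htp).comp (phiBar g t n hG htp)).comp (pr g t n) =
      pr g t n := by
    refine FreeGroup.ext_hom _ _ ?_
    rintro ⟨i, bb⟩
    rcases bb with _ | _
    · rw [MonoidHom.comp_apply, MonoidHom.comp_apply, phiBar_pr hG htp,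
        a_of hG htp i, phi_a hG htp]
      rw [psiH, MonoidHom.noncommCoprod_apply]
      simp only [map_one, one_mul]
      rw [psi2_apply hG htp]
      exact (A_val hG htp (by omega) (by omega)).symm
    · rw [MonoidHom.comp_apply, MonoidHom.comp_apply, phiBar_pr hG htp,
        b_of hG htp i, phi_b hG htp]
      rw [psiH, MonoidHom.noncommCoprod_apply]
      simp only [map_one, mul_one]
      rw [zpowersHom_apply, toAdd_ofAdd]
      exact (B_val hG htp (by omega) (by omega)).symm
  refine MonoidHom.ext fun q => ?_
  obtain ⟨w, rfl⟩ := pr_surjective g t n q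
  exact DFunLike.congr_fun key w

/-- `φ̄ ∘ ψ = id`. -/
lemma phiBar_psi (hG : g = 4 * t ∨ g = 4 * t + 1) (htp : 1 ≤ t) :
    (phiBar g t n hG htp).comp (psiH g t n hG htp) = MonoidHom.id _ := by
  have hb : phiBar g t n hG htp (pr g t n (b g t)) = (Multiplicative.ofAdd (1 : ℤ), 1) := by
    rw [phiBar_pr hG htp, phi_b hG htp, eZ_t hG htp]
  have ha : phiBar g t n hG htp (pr g t n (a g t)) =
      (1, Multiplicative.ofAdd ((1 : ℤ) : ZMod n)) := by
    rw [phiBar_pr hG htp, phi_a hG htp, eZ_t hG htp]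
  refine MonoidHom.ext fun p => ?_
  obtain ⟨x, y⟩ := p
  obtain ⟨k, hk⟩ := ZMod.intCast_surjective (Multiplicative.toAdd y)
  have hy : y = Multiplicative.ofAdd ((k : ZMod n)) := by rw [hk, ofAdd_toAdd]
  rw [MonoidHom.comp_apply, MonoidHom.id_apply]
  rw [show ((x, y) : M n) = (x, 1) * (1, y) by rw [Prod.mk_mul_mk, mul_one, one_mul]]
  rw [map_mul, map_mul]
  have h1 : psiH g t n hG htp ((x, 1) : M n) = pr g t n (b g t) ^ x.toAdd := by
    rw [psiH, MonoidHom.noncommCoprod_apply, map_one, mul_one, zpowersHom_apply]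
  have h2 : psiH g t n hG htp ((1, y) : M n) = pr g t n (a g t) ^ k := by
    rw [psiH, MonoidHom.noncommCoprod_apply, map_one, one_mul, hy, psi2_apply hG htp]
  rw [h1, h2, map_zpow, map_zpow, hb, ha, prod_zpow, prod_zpow]
  rw [Prod.mk_mul_mk]
  congr 1
  · rw [one_zpow, mul_one, ← ofAdd_zsmul, smul_eq_mul, mul_one, ofAdd_toAdd]
    simp
  · rw [one_zpow, one_mul, ← ofAdd_zsmul, zsmul_eq_mul]
    simp [hy]

end Final

/-- Let `g ≥ 4` with `m = ⌊g/2⌋ = 2t` even and let `n ≥ 1`. Then the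
quotient of `π_g` by the normal closure of the images of the words in `ℬ^g_1 ∪ 𝒞 ∪ Φ_n`
is isomorphic to `ℤ × ℤ/nℤ`. -/
theorem G3_iso_int_prod_zmod (g t n : ℕ) (hg : 4 ≤ g) (ht : g / 2 = 2 * t) (hn : 1 ≤ n) :
    Nonempty
      (quotBy g (Bset g 1 g ∪ Cset g ∪ Phi g (if g % 2 = 0 then 1 else 2) t n) ≃*
        Multiplicative ℤ × Multiplicative (ZMod n)) := by
  have hG : g = 4 * t ∨ g = 4 * t + 1 := by omega
  have htp : 1 ≤ t := by omega
  exact ⟨MonoidHom.toMulEquiv (phiBar g t n hG htp) (psiH g t n hG htp)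
    (psi_phiBar hG htp) (phiBar_psi hG htp)⟩
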